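/- Let p and q be d-dimensional binary probability tables with the same support (p_α = 0 if and only if q_α = 0 for every α), and suppose q has uniform margins. Then there exist vectors w₁,…,w_d ∈ ℝ², each with both entries strictly positive, such that the table p̃ defined by p̃_α = p_α ∏_{i=1}^d w_{i,α_i} has uniform margins. -/

import Mathlib

open Finset Real RealInnerProductSpace

namespace Stmt2Aux

variable {d : ℕ}

noncomputable def sg (α : Fin d → Fin 2) : EuclideanSpace ℝ (Fin d) :=
  WithLp.toLp 2 fun i => if α i = 0 then (1:ℝ) else -1

lemma inner_sg (t : EuclideanSpace ℝ (Fin d)) (α : Fin d → Fin 2) :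
    ⟪t, sg α⟫ = ∑ i, t i * sg α i := by
  simp [PiLp.inner_apply, RCLike.inner_apply, mul_comm]

noncomputable def V (p : (Fin d → Fin 2) → ℝ) : Submodule ℝ (EuclideanSpace ℝ (Fin d)) :=
  Submodule.span ℝ {x | ∃ α, p α ≠ 0 ∧ ∃ β, p β ≠ 0 ∧ x = sg α - sg β}

noncomputable def psi (p : (Fin d → Fin 2) → ℝ) (v : EuclideanSpace ℝ (Fin d)) : ℝ :=
  ∑ α, p α * max 0 ⟪v, sg α⟫

noncomputable def F (p : (Fin d → Fin 2) → ℝ) (t : EuclideanSpace ℝ (Fin d)) : ℝ :=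
  ∑ α, p α * Real.exp ⟪t, sg α⟫

lemma sum_smul_sg_eq_zero (q : (Fin d → Fin 2) → ℝ) (hqsum : ∑ α, q α = 1)
    (hqmarg : ∀ i : Fin d, ∑ α ∈ univ.filter (fun α : Fin d → Fin 2 => α i = 0), q α = 1/2) :
    ∑ α, q α • sg α = (0 : EuclideanSpace ℝ (Fin d)) := by
  ext i
  have happ : (∑ α, q α • sg α) i = ∑ α, q α * sg α i := by
    simp [WithLp.ofLp_sum]
  have hsplit := Finset.sum_filter_add_sum_filter_not univ
    (fun α : Fin d → Fin 2 => α i = 0) (fun α => q α * sg α i)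
  have h1 : ∑ α ∈ univ.filter (fun α : Fin d → Fin 2 => α i = 0), q α * sg α i
      = ∑ α ∈ univ.filter (fun α : Fin d → Fin 2 => α i = 0), q α := by
    refine Finset.sum_congr rfl fun α hα => ?_
    simp only [mem_filter] at hα
    simp [sg, hα.2]
  have h2 : ∑ α ∈ univ.filter (fun α : Fin d → Fin 2 => ¬ α i = 0), q α * sg α i
      = -∑ α ∈ univ.filter (fun α : Fin d → Fin 2 => ¬ α i = 0), q α := by
    rw [← Finset.sum_neg_distrib]
    refine Finset.sum_congr rfl fun α hα => ?_
    simp only [mem_filter] at hα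
    simp [sg, hα.2]
  have h3 := Finset.sum_filter_add_sum_filter_not univ
    (fun α : Fin d → Fin 2 => α i = 0) q
  show (∑ α, q α • sg α) i = 0
  rw [happ, ← hsplit, h1, h2]
  rw [hqmarg i] at h3 ⊢
  rw [hqsum] at h3
  linarith

lemma zero_of_inner_nonpos (p q : (Fin d → Fin 2) → ℝ)
    (hqnn : ∀ α, 0 ≤ q α)
    (hsupp : ∀ α, p α = 0 ↔ q α = 0)
    (hqs : ∑ α, q α • sg α = (0 : EuclideanSpace ℝ (Fin d)))
    (v : EuclideanSpace ℝ (Fin d)) (hv : v ∈ V p)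
    (hle : ∀ α, p α ≠ 0 → ⟪v, sg α⟫ ≤ 0) : v = 0 := by
  have hsum0 : ∑ α, q α * ⟪v, sg α⟫ = 0 := by
    have h : ⟪v, ∑ α, q α • sg α⟫ = 0 := by rw [hqs]; simp
    rw [inner_sum] at h
    simp only [real_inner_smul_right] at h
    exact h
  have hterm : ∀ α ∈ (univ : Finset (Fin d → Fin 2)), q α * ⟪v, sg α⟫ ≤ 0 := by
    intro α _
    by_cases hp : p α = 0
    · simp [(hsupp α).mp hp]
    · exact mul_nonpos_of_nonneg_of_nonpos (hqnn α) (hle α hp)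
  have hzero : ∀ α, p α ≠ 0 → ⟪v, sg α⟫ = 0 := by
    intro α hp
    have h := (Finset.sum_eq_zero_iff_of_nonpos hterm).mp hsum0 α (mem_univ α)
    have hq : q α ≠ 0 := fun h0 => hp ((hsupp α).mpr h0)
    exact (mul_eq_zero.mp h).resolve_left hq
  have hVle : V p ≤ (ℝ ∙ v)ᗮ := by
    rw [V, Submodule.span_le]
    rintro x ⟨α, hα, β, hβ, rfl⟩
    rw [SetLike.mem_coe, Submodule.mem_orthogonal_singleton_iff_inner_right]
    rw [inner_sub_right, hzero α hα, hzero β hβ, sub_zero]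
  have : ⟪v, v⟫ = 0 := by
    have := hVle hv
    rwa [Submodule.mem_orthogonal_singleton_iff_inner_right] at this
  exact inner_self_eq_zero.mp this

lemma psi_cont (p : (Fin d → Fin 2) → ℝ) : Continuous (psi p) := by
  refine continuous_finset_sum _ fun α _ => ?_
  exact continuous_const.mul (continuous_const.max (continuous_id.inner continuous_const))

lemma psi_hom (p : (Fin d → Fin 2) → ℝ) (c : ℝ) (hc : 0 ≤ c) (x : EuclideanSpace ℝ (Fin d)) :
    psi p (c • x) = c * psi p x := by
  unfold psi
  rw [Finset.mul_sum]
  refine Finset.sum_congr rfl fun α _ => ?_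
  rw [real_inner_smul_left]
  have h : (0:ℝ) ⊔ c * ⟪x, sg α⟫ = c * ((0:ℝ) ⊔ ⟪x, sg α⟫) := by
    rw [mul_max_of_nonneg _ _ hc, mul_zero]
  rw [h]; ring

lemma psi_nonneg (p : (Fin d → Fin 2) → ℝ) (hpnn : ∀ α, 0 ≤ p α)
    (v : EuclideanSpace ℝ (Fin d)) : 0 ≤ psi p v :=
  Finset.sum_nonneg fun α _ => mul_nonneg (hpnn α) (le_max_left 0 _)

lemma inner_nonpos_of_psi_zero (p : (Fin d → Fin 2) → ℝ) (hpnn : ∀ α, 0 ≤ p α)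
    (v : EuclideanSpace ℝ (Fin d)) (h : psi p v = 0) :
    ∀ α, p α ≠ 0 → ⟪v, sg α⟫ ≤ 0 := by
  intro α hα
  have hterm : ∀ β ∈ (univ : Finset (Fin d → Fin 2)), 0 ≤ p β * max 0 ⟪v, sg β⟫ :=
    fun β _ => mul_nonneg (hpnn β) (le_max_left 0 _)
  have h0 := (Finset.sum_eq_zero_iff_of_nonneg hterm).mp h α (mem_univ α)
  have hmax : max 0 ⟪v, sg α⟫ = 0 := (mul_eq_zero.mp h0).resolve_left hα
  by_contra hpos
  push_neg at hpos
  rw [max_eq_right hpos.le] at hmax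
  exact hpos.ne' hmax

lemma exists_eps (p q : (Fin d → Fin 2) → ℝ)
    (hpnn : ∀ α, 0 ≤ p α) (hqnn : ∀ α, 0 ≤ q α)
    (hsupp : ∀ α, p α = 0 ↔ q α = 0)
    (hqs : ∑ α, q α • sg α = (0 : EuclideanSpace ℝ (Fin d))) :
    ∃ ε > 0, ∀ v : V p, ε * ‖v‖ ≤ psi p (v : EuclideanSpace ℝ (Fin d)) := by
  by_cases hne : (Metric.sphere (0 : V p) 1).Nonempty
  · obtain ⟨v₀, hv₀mem, hmin⟩ := (isCompact_sphere (0 : V p) 1).exists_isMinOn hne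
      ((psi_cont p).comp continuous_subtype_val).continuousOn
    have hv₀norm : ‖v₀‖ = 1 := by simpa using hv₀mem
    have hv₀ne : (v₀ : EuclideanSpace ℝ (Fin d)) ≠ 0 := by
      intro h
      have : v₀ = 0 := Subtype.ext h
      rw [this] at hv₀norm; simp at hv₀norm
    have hεpos : 0 < psi p (v₀ : EuclideanSpace ℝ (Fin d)) := by
      rcases lt_or_eq_of_le (psi_nonneg p hpnn (v₀ : EuclideanSpace ℝ (Fin d))) with h | h
      · exact h
      · exact absurd (zero_of_inner_nonpos p q hqnn hsupp hqs _ v₀.2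
          (inner_nonpos_of_psi_zero p hpnn _ h.symm)) hv₀ne
    refine ⟨psi p (v₀ : EuclideanSpace ℝ (Fin d)), hεpos, fun v => ?_⟩
    by_cases hv : v = 0
    · subst hv
      simp [psi]
    · set c : ℝ := ‖v‖ with hc
      have hcpos : 0 < c := norm_pos_iff.mpr hv
      set u : V p := c⁻¹ • v with hu
      have hunorm : u ∈ Metric.sphere (0 : V p) 1 := by
        rw [mem_sphere_zero_iff_norm, hu, norm_smul, norm_inv, Real.norm_eq_abs,
          abs_of_pos hcpos, inv_mul_cancel₀ hcpos.ne']
      have h1 := hmin hunorm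
      have h2 : psi p (v : EuclideanSpace ℝ (Fin d))
          = c * psi p (u : EuclideanSpace ℝ (Fin d)) := by
        rw [hu]
        push_cast
        rw [psi_hom p _ (inv_pos.mpr hcpos).le, ← mul_assoc, mul_inv_cancel₀ hcpos.ne', one_mul]
      rw [h2]
      calc psi p ((v₀ : EuclideanSpace ℝ (Fin d))) * c
          ≤ psi p ((u : EuclideanSpace ℝ (Fin d))) * c :=
            mul_le_mul_of_nonneg_right h1 hcpos.le
        _ = c * psi p ((u : EuclideanSpace ℝ (Fin d))) := mul_comm _ _
  · refine ⟨1, one_pos, fun v => ?_⟩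
    have hv : v = 0 := by
      by_contra h
      have hp : (0:ℝ) < ‖v‖ := norm_pos_iff.mpr h
      exact hne ⟨(‖v‖⁻¹ • v), by
        rw [mem_sphere_zero_iff_norm, norm_smul, norm_inv, Real.norm_eq_abs,
          abs_of_pos hp, inv_mul_cancel₀ hp.ne']⟩
    subst hv
    simp [psi]

lemma F_cont (p : (Fin d → Fin 2) → ℝ) : Continuous (F p) := by
  refine continuous_finset_sum _ fun α _ => ?_
  exact continuous_const.mul (Real.continuous_exp.comp (continuous_id.inner continuous_const))

lemma exists_min (p : (Fin d → Fin 2) → ℝ) (hpnn : ∀ α, 0 ≤ p α)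
    (ε : ℝ) (hε : 0 < ε)
    (hbd : ∀ v : V p, ε * ‖v‖ ≤ psi p (v : EuclideanSpace ℝ (Fin d))) :
    ∃ t, t ∈ V p ∧ ∀ x ∈ V p, F p t ≤ F p x := by
  have hle : ∀ v : V p, ε * ‖v‖ ≤ F p (v : EuclideanSpace ℝ (Fin d)) := by
    intro v
    refine (hbd v).trans (Finset.sum_le_sum fun α _ => ?_)
    refine mul_le_mul_of_nonneg_left ?_ (hpnn α)
    exact max_le (Real.exp_pos _).le
      (by linarith [Real.add_one_le_exp ⟪(v : EuclideanSpace ℝ (Fin d)), sg α⟫])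
  have hcoer : Filter.Tendsto (fun v : V p => F p (v : EuclideanSpace ℝ (Fin d)))
      (Filter.cocompact (V p)) Filter.atTop :=
    Filter.tendsto_atTop_mono hle ((tendsto_norm_cocompact_atTop).const_mul_atTop hε)
  haveI : Nonempty (V p) := ⟨0⟩
  obtain ⟨v₀, hv₀⟩ := ((F_cont p).comp continuous_subtype_val).exists_forall_le hcoer
  exact ⟨v₀, v₀.2, fun x hx => hv₀ ⟨x, hx⟩⟩

lemma grad_zero (p : (Fin d → Fin 2) → ℝ) (t : EuclideanSpace ℝ (Fin d))
    (htmem : t ∈ V p) (hmin : ∀ x ∈ V p, F p t ≤ F p x)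
    (u : EuclideanSpace ℝ (Fin d)) (hu : u ∈ V p) :
    ∑ α, (p α * Real.exp ⟪t, sg α⟫) * ⟪u, sg α⟫ = 0 := by
  set h : ℝ → ℝ := fun r => ∑ α, p α * Real.exp (⟪t, sg α⟫ + r * ⟪u, sg α⟫) with hh
  have hF : ∀ r, h r = F p (t + r • u) := by
    intro r
    refine Finset.sum_congr rfl fun α _ => ?_
    rw [inner_add_left, real_inner_smul_left]
  have hlocal : IsLocalMin h 0 := by
    refine Filter.Eventually.of_forall fun r => ?_
    rw [hF, hF]
    have h0 : t + (0:ℝ) • u = t := by simp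
    rw [h0]
    exact hmin _ (Submodule.add_mem _ htmem (Submodule.smul_mem _ _ hu))
  have hderiv : HasDerivAt h
      (∑ α, p α * (Real.exp (⟪t, sg α⟫ + 0 * ⟪u, sg α⟫) * ⟪u, sg α⟫)) 0 := by
    refine HasDerivAt.fun_sum fun α _ => ?_
    have h1 : HasDerivAt (fun r : ℝ => ⟪t, sg α⟫ + r * ⟪u, sg α⟫) (⟪u, sg α⟫) 0 :=
      (hasDerivAt_mul_const _).const_add _
    exact (h1.exp).const_mul _
  have h0 := hlocal.hasDerivAt_eq_zero hderiv
  rw [← h0]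
  refine Finset.sum_congr rfl fun α _ => ?_
  rw [zero_mul, add_zero]
  ring

lemma mem_V (p q : (Fin d → Fin 2) → ℝ) (c : (Fin d → Fin 2) → ℝ)
    (hc0 : ∀ α, p α = 0 → c α = 0)
    (hsupp : ∀ α, p α = 0 ↔ q α = 0)
    (hqsum : ∑ α, q α = 1)
    (hqs : ∑ α, q α • sg α = (0 : EuclideanSpace ℝ (Fin d)))
    (α₀ : Fin d → Fin 2) (hα₀ : p α₀ ≠ 0) :
    (∑ α, c α • sg α) ∈ V p := by
  set Z : ℝ := ∑ α, c α with hZ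
  have key : ∑ α, c α • sg α = ∑ α, (c α - Z * q α) • (sg α - sg α₀) := by
    have e1 : ∀ α : Fin d → Fin 2, (c α - Z * q α) • (sg α - sg α₀)
        = (c α • sg α - (Z * q α) • sg α) - (c α • sg α₀ - (Z * q α) • sg α₀) := by
      intro α; module
    rw [Finset.sum_congr rfl (fun α _ => e1 α), Finset.sum_sub_distrib,
      Finset.sum_sub_distrib, Finset.sum_sub_distrib]
    have e2 : ∑ α, (Z * q α) • sg α = (0 : EuclideanSpace ℝ (Fin d)) := by
      have h : ∑ α, (Z * q α) • sg α = Z • ∑ α, q α • sg α := by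
        rw [Finset.smul_sum]
        exact Finset.sum_congr rfl fun α _ => mul_smul Z (q α) (sg α)
      rw [h, hqs, smul_zero]
    have e3 : ∑ α, c α • sg α₀ = Z • sg α₀ := by rw [← Finset.sum_smul]
    have e4 : ∑ α, (Z * q α) • sg α₀ = Z • sg α₀ := by
      rw [← Finset.sum_smul, ← Finset.mul_sum, hqsum, mul_one]
    rw [e2, e3, e4]
    abel
  rw [key]
  refine Submodule.sum_mem _ fun α _ => ?_
  by_cases hp : p α = 0
  · have h : c α - Z * q α = 0 := by rw [hc0 α hp, (hsupp α).mp hp, mul_zero, sub_zero]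
    rw [h, zero_smul]
    exact Submodule.zero_mem _
  · exact Submodule.smul_mem _ _ (Submodule.subset_span ⟨α, hp, α₀, hα₀, rfl⟩)

/-- The key analytic fact: there is a tilt `t` such that the tilted table has all
signed margins equal to zero (unnormalized). -/
lemma exists_tilt (p q : (Fin d → Fin 2) → ℝ)
    (hpnn : ∀ α, 0 ≤ p α) (hpsum : ∑ α, p α = 1)
    (hqnn : ∀ α, 0 ≤ q α) (hqsum : ∑ α, q α = 1)
    (hsupp : ∀ α, p α = 0 ↔ q α = 0)
    (hqmarg : ∀ i : Fin d,
      ∑ α ∈ univ.filter (fun α : Fin d → Fin 2 => α i = 0), q α = 1 / 2) :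
    ∃ t : EuclideanSpace ℝ (Fin d),
      ∀ i : Fin d, ∑ α, (p α * Real.exp ⟪t, sg α⟫) * sg α i = 0 := by
  have hqs := sum_smul_sg_eq_zero q hqsum hqmarg
  obtain ⟨ε, hε, hbd⟩ := exists_eps p q hpnn hqnn hsupp hqs
  obtain ⟨t, htmem, hmin⟩ := exists_min p hpnn ε hε hbd
  -- some point in the support
  have hα₀ : ∃ α₀, p α₀ ≠ 0 := by
    by_contra h
    push_neg at h
    rw [Finset.sum_eq_zero (fun α _ => h α)] at hpsum
    exact one_ne_zero hpsum.symm
  obtain ⟨α₀, hα₀⟩ := hα₀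
  set c : (Fin d → Fin 2) → ℝ := fun α => p α * Real.exp ⟪t, sg α⟫ with hc
  set m : EuclideanSpace ℝ (Fin d) := ∑ α, c α • sg α with hm
  have hmV : m ∈ V p :=
    mem_V p q c (fun α h => by rw [hc]; simp [h]) hsupp hqsum hqs α₀ hα₀
  have hmOrth : m ∈ (V p)ᗮ := by
    rw [Submodule.mem_orthogonal]
    intro u hu
    rw [hm, inner_sum]
    simp only [real_inner_smul_right]
    rw [show (∑ α, c α * ⟪u, sg α⟫) = ∑ α, (p α * Real.exp ⟪t, sg α⟫) * ⟪u, sg α⟫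
      from Finset.sum_congr rfl fun α _ => rfl]
    exact grad_zero p t htmem hmin u hu
  have hm0 : m = 0 := by
    have h := (Submodule.orthogonal_disjoint (V p)).le_bot ⟨hmV, hmOrth⟩
    exact (Submodule.mem_bot ℝ).mp h
  refine ⟨t, fun i => ?_⟩
  have happ : (∑ α, c α • sg α) i = ∑ α, c α * sg α i := by
    simp [WithLp.ofLp_sum]
  have := congrArg (fun x : EuclideanSpace ℝ (Fin d) => x i) hm0
  simp only at this
  rw [hm] at this
  rw [happ] at this
  exact this

end Stmt2Aux

/-- If `p` and `q` are `d`-dimensional binary probability tables with the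
same support and `q` has uniform margins, then there are strictly positive weight
vectors `w i : Fin 2 → ℝ` such that `α ↦ p α * ∏ i, w i (α i)` is a probability table
with uniform margins. -/
theorem stmt_2 (d : ℕ) (p q : (Fin d → Fin 2) → ℝ)
    (hpnn : ∀ α, 0 ≤ p α) (hpsum : ∑ α, p α = 1)
    (hqnn : ∀ α, 0 ≤ q α) (hqsum : ∑ α, q α = 1)
    (hsupp : ∀ α, p α = 0 ↔ q α = 0)
    (hqmarg : ∀ i : Fin d,
      ∑ α ∈ Finset.univ.filter (fun α : Fin d → Fin 2 => α i = 0), q α = 1 / 2) :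
    ∃ w : Fin d → Fin 2 → ℝ, (∀ i b, 0 < w i b) ∧
      (∀ α, 0 ≤ p α * ∏ i, w i (α i)) ∧
      (∑ α, p α * ∏ i, w i (α i)) = 1 ∧
      ∀ i : Fin d,
        ∑ α ∈ Finset.univ.filter (fun α : Fin d → Fin 2 => α i = 0),
          p α * ∏ j, w j (α j) = 1 / 2 := by
  classical
  rcases Nat.eq_zero_or_pos d with hd | hd
  · subst hd
    refine ⟨fun _ _ => 1, fun i b => one_pos, fun α => by simpa using hpnn α, ?_, fun i => i.elim0⟩
    simpa using hpsum
  · obtain ⟨t, ht⟩ := Stmt2Aux.exists_tilt p q hpnn hpsum hqnn hqsum hsupp hqmarg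
    set c : (Fin d → Fin 2) → ℝ := fun α => p α * Real.exp ⟪t, Stmt2Aux.sg α⟫ with hc
    set Z : ℝ := ∑ α, c α with hZ
    have hcnn : ∀ α, 0 ≤ c α := fun α => mul_nonneg (hpnn α) (Real.exp_pos _).le
    have hα₀ : ∃ α₀, p α₀ ≠ 0 := by
      by_contra h
      push_neg at h
      rw [Finset.sum_eq_zero (fun α _ => h α)] at hpsum
      exact one_ne_zero hpsum.symm
    obtain ⟨α₀, hα₀⟩ := hα₀
    have hZpos : 0 < Z := by
      refine Finset.sum_pos' (fun α _ => hcnn α) ⟨α₀, Finset.mem_univ _, ?_⟩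
      exact mul_pos (lt_of_le_of_ne (hpnn α₀) (Ne.symm hα₀)) (Real.exp_pos _)
    set i₀ : Fin d := ⟨0, hd⟩ with hi₀
    set w : Fin d → Fin 2 → ℝ := fun i b =>
      (if i = i₀ then Z⁻¹ else 1) * Real.exp (t i * (if b = 0 then 1 else -1)) with hw
    have hwpos : ∀ i b, 0 < w i b := by
      intro i b
      rw [hw]
      refine mul_pos ?_ (Real.exp_pos _)
      split
      · exact inv_pos.mpr hZpos
      · exact one_pos
    have hprod : ∀ α : Fin d → Fin 2, (∏ i, w i (α i)) = Z⁻¹ * Real.exp ⟪t, Stmt2Aux.sg α⟫ := by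
      intro α
      rw [hw]
      rw [Finset.prod_mul_distrib]
      congr 1
      · rw [Finset.prod_ite_eq' Finset.univ i₀ (fun _ => Z⁻¹)]
        simp
      · rw [← Real.exp_sum, Stmt2Aux.inner_sg]
        rfl
    have hterm : ∀ α : Fin d → Fin 2, p α * ∏ i, w i (α i) = Z⁻¹ * c α := by
      intro α
      rw [hprod α, hc]
      ring
    have hsum : (∑ α, p α * ∏ i, w i (α i)) = 1 := by
      rw [Finset.sum_congr rfl fun α _ => hterm α, ← Finset.mul_sum, ← hZ,
        inv_mul_cancel₀ hZpos.ne']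
    refine ⟨w, hwpos, fun α => mul_nonneg (hpnn α) (Finset.prod_nonneg fun i _ => (hwpos i (α i)).le),
      hsum, fun i => ?_⟩
    -- margins
    have hmz := ht i
    have h1 : ∑ α ∈ univ.filter (fun α : Fin d → Fin 2 => α i = 0), c α * Stmt2Aux.sg α i
        = ∑ α ∈ univ.filter (fun α : Fin d → Fin 2 => α i = 0), c α := by
      refine Finset.sum_congr rfl fun α hα => ?_
      simp only [mem_filter] at hα
      simp [Stmt2Aux.sg, hα.2]
    have h2 : ∑ α ∈ univ.filter (fun α : Fin d → Fin 2 => ¬ α i = 0), c α * Stmt2Aux.sg α i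
        = -∑ α ∈ univ.filter (fun α : Fin d → Fin 2 => ¬ α i = 0), c α := by
      rw [← Finset.sum_neg_distrib]
      refine Finset.sum_congr rfl fun α hα => ?_
      simp only [mem_filter] at hα
      simp [Stmt2Aux.sg, hα.2]
    have hsplit := Finset.sum_filter_add_sum_filter_not univ
      (fun α : Fin d → Fin 2 => α i = 0) (fun α => c α * Stmt2Aux.sg α i)
    have hsplit2 := Finset.sum_filter_add_sum_filter_not univ
      (fun α : Fin d → Fin 2 => α i = 0) c
    rw [← hsplit, h1, h2] at hmz
    rw [← hZ] at hsplit2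
    have hhalf : ∑ α ∈ univ.filter (fun α : Fin d → Fin 2 => α i = 0), c α = Z / 2 := by
      linarith
    rw [Finset.sum_congr rfl fun α _ => hterm α, ← Finset.mul_sum, hhalf]
    field_simp
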